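/- arXiv:math/0505480 — 5 statements merged into one kernel-verified Lean document; each statement's English description precedes it below -/
import Mathlib

section
/- Let g = [[a e^{L/2}, b e^{L/2}], [c e^{-L/2}, d e^{-L/2}]] be an element of PSL(2,R) with a > 0, ad - bc = 1, and a, b, c, d bounded. Then the displacement μ(g), defined by cosh(μ(g)/2) = trace(g)/2 with μ(g) ≥ 0, satisfies μ(g) = L + 2·ln(a) + O(e^{-L}) as L → ∞. -/
/-! Put `u = μ / 2` and `v = L / 2 + log a`. Then `2 cosh v = a e^{L/2} + a⁻¹ e^{-L/2}` differs
from the trace `2 cosh u = a e^{L/2} + d e^{-L/2}` only in the coefficient of `e^{-L/2}`, so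
`|cosh u - cosh v| ≤ B e^{-L/2}`. Both `u` and `v` are at least `L/2 - log (4B)`, where the slope
`sinh` of `cosh` is of order `e^{L/2}`; by the mean value theorem `|u - v| = O(e^{-L})`. -/

open Real

theorem Real.sinh_mul_sub_le_cosh_sub {m x y : ℝ} (hmx : m ≤ x) (hxy : x ≤ y) :
    sinh m * (y - x) ≤ cosh y - cosh x :=
  (convex_Ici m).mul_sub_le_image_sub_of_le_deriv continuous_cosh.continuousOn
    differentiable_cosh.differentiableOn
    (fun z hz => by
      rw [interior_Ici] at hz
      rw [deriv_cosh]
      exact sinh_le_sinh.mpr hz.le)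
    x hmx y (hmx.trans hxy) hxy

theorem Real.sinh_mul_abs_sub_le_abs_cosh_sub {m x y : ℝ} (hx : m ≤ x) (hy : m ≤ y) :
    sinh m * |x - y| ≤ |cosh x - cosh y| := by
  wlog hxy : x ≤ y generalizing x y
  · rw [abs_sub_comm, abs_sub_comm (cosh x)]
    exact this hy hx (le_of_not_ge hxy)
  rw [abs_sub_comm, abs_of_nonneg (sub_nonneg.2 hxy), abs_sub_comm]
  exact (sinh_mul_sub_le_cosh_sub hx hxy).trans (le_abs_self _)

theorem Real.exp_div_four_le_sinh {m : ℝ} (hm : 2 ≤ exp m) : exp m / 4 ≤ sinh m := by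
  have hpos := exp_pos m
  have : exp (-m) ≤ 1 / 2 := by
    rw [exp_neg, inv_le_comm₀ hpos (by norm_num)]
    linarith
  rw [sinh_eq]
  linarith

theorem Real.abs_sub_le_mul_abs_cosh_sub {k x y : ℝ} (hk : 2 ≤ k) (hx : log k ≤ x)
    (hy : log k ≤ y) : |x - y| ≤ 4 / k * |cosh x - cosh y| := by
  have hk0 : 0 < k := by linarith
  have hsinh : k / 4 ≤ sinh (log k) := by
    simpa only [exp_log hk0] using exp_div_four_le_sinh (m := log k) (by rwa [exp_log hk0])
  have := (mul_le_mul_of_nonneg_right hsinh (abs_nonneg (x - y))).trans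
    (sinh_mul_abs_sub_le_abs_cosh_sub hx hy)
  rw [div_mul_eq_mul_div, le_div_iff₀ hk0]
  linarith

theorem Real.log_le_of_le_cosh {k x : ℝ} (hk : 0 < k) (hx : 0 ≤ x) (h : k ≤ cosh x) :
    log k ≤ x := by
  rw [log_le_iff_le_exp hk]
  linarith [exp_sub_cosh x, sinh_nonneg_iff.2 hx]

theorem Real.cosh_add_log {a : ℝ} (ha : 0 < a) (t : ℝ) :
    cosh (t + log a) = (a * exp t + a⁻¹ * exp (-t)) / 2 := by
  rw [cosh_eq, neg_add, exp_add, exp_add, exp_neg (log a), exp_log ha]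
  ring

theorem Real.abs_sub_cosh_add_log_le {a d B : ℝ} (ha : 0 < a) (haB : a⁻¹ ≤ B) (hdB : |d| ≤ B)
    (t : ℝ) : |(a * exp t + d * exp (-t)) / 2 - cosh (t + log a)| ≤ B * exp (-t) := by
  have hdiff : |d - a⁻¹| ≤ 2 * B :=
    (abs_sub _ _).trans (by rw [abs_of_pos (inv_pos.2 ha)]; linarith)
  rw [cosh_add_log ha, abs_sub_comm,
    show (a * exp t + a⁻¹ * exp (-t)) / 2 - (a * exp t + d * exp (-t)) / 2
      = (a⁻¹ - d) * exp (-t) / 2 by ring,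
    abs_div, abs_mul, abs_of_pos (exp_pos _), abs_two, abs_sub_comm]
  calc |d - a⁻¹| * exp (-t) / 2 ≤ 2 * B * exp (-t) / 2 := by gcongr
    _ = B * exp (-t) := by ring

theorem Real.log_div_le_of_cosh_eq {a d B E x : ℝ} (hB : 0 < B) (hBa : B⁻¹ ≤ a) (hdB : |d| ≤ B)
    (hE : 8 * B ≤ E) (hx : 0 ≤ x) (h : cosh x = (a * E + d * E⁻¹) / 2) :
    log (E / (4 * B)) ≤ x := by
  have hE0 : 0 < E := by linarith
  refine log_le_of_le_cosh (by positivity) hx ?_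
  have h1 : E / B ≤ a * E := by rw [div_eq_inv_mul]; gcongr
  have h2 : -(B / E) ≤ d * E⁻¹ := by
    rw [div_eq_mul_inv, ← neg_mul]; gcongr; exact (abs_le.1 hdB).1
  have h3 : B / E ≤ E / B / 2 := by
    rw [div_div, div_le_div_iff₀ hE0 (by positivity)]; nlinarith
  rw [h, show E / (4 * B) = E / B / 4 by ring]
  linarith

/-- For `g = G_L · [[a,b],[c,d]] ∈ PSL(2,ℝ)` with `a > 0`, `ad − bc = 1`
and `a, b, c, d` bounded (by `B`), the displacement `μ(g)`, defined by
`cosh(μ(g)/2) = trace(g)/2 = (a e^{L/2} + d e^{−L/2})/2` with `μ(g) ≥ 0`, satisfies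
`μ(g) = L + 2 ln a + O(e^{−L})` as `L → ∞`. -/
theorem displacement_asymptotic (B : ℝ) (hB : 0 < B) :
    ∃ C L₀ : ℝ, 0 < C ∧ ∀ a b c d : ℝ, 0 < a → a * d - b * c = 1 →
      |a| ≤ B → |b| ≤ B → |c| ≤ B → |d| ≤ B → B⁻¹ ≤ a →
      ∀ L : ℝ, L₀ ≤ L → ∀ μ : ℝ, 0 ≤ μ →
        Real.cosh (μ / 2) = (a * Real.exp (L / 2) + d * Real.exp (-(L / 2))) / 2 →
        |μ - (L + 2 * Real.log a)| ≤ C * Real.exp (-L) := by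
  refine ⟨32 * B ^ 2, 2 * log (8 * B), by positivity, ?_⟩
  intro a b c d ha _ _ _ _ hdB hBa L hL μ hμ hcosh
  have haB : a⁻¹ ≤ B := (inv_le_comm₀ ha hB).2 hBa
  have hE : 8 * B ≤ exp (L / 2) := by
    rw [← exp_log (by positivity : 0 < 8 * B)]
    exact exp_le_exp.2 (by linarith)
  have hk : 2 ≤ exp (L / 2) / (4 * B) := by rw [le_div_iff₀ (by positivity)]; linarith
  have hu : log (exp (L / 2) / (4 * B)) ≤ μ / 2 :=
    log_div_le_of_cosh_eq hB hBa hdB hE (by positivity) (by rwa [← exp_neg])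
  have hv : log (exp (L / 2) / (4 * B)) ≤ L / 2 + log a := by
    have : log a⁻¹ ≤ log (4 * B) := log_le_log (inv_pos.2 ha) (by linarith)
    rw [log_inv] at this
    rw [log_div (exp_pos _).ne' (by positivity), log_exp]
    linarith
  have hgap := abs_sub_cosh_add_log_le ha haB hdB (L / 2)
  rw [← hcosh] at hgap
  calc |μ - (L + 2 * log a)| = 2 * |μ / 2 - (L / 2 + log a)| := by
        rw [← abs_two, ← abs_mul, abs_two]; ring_nf
    _ ≤ 2 * (4 / (exp (L / 2) / (4 * B)) * (B * exp (-(L / 2)))) := by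
        gcongr
        exact (abs_sub_le_mul_abs_cosh_sub hk hu hv).trans (by gcongr)
    _ = 32 * B ^ 2 * exp (-L) := by
        rw [exp_neg, exp_neg, show exp L = exp (L / 2) ^ 2 by rw [← exp_nat_mul]; ring_nf]
        field_simp
        norm_num
end

section
/- For a right-angled hexagon in hyperbolic 3-space with ordered side widths H_1,...,H_6 (complex widths of the successive double crosses), the law of sines holds: sinh(H_1)/sinh(H_4) = sinh(H_3)/sinh(H_6) = sinh(H_5)/sinh(H_2). -/
/-!
Encode the geodesic with ideal endpoints `a`, `b` by the coefficients of `(t - a) * (t - b)`.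
The polarization of `4 p₀ p₂ - p₁²` is a nondegenerate symmetric form on `ℂ³` for which
perpendicular geodesics are orthogonal and the geodesic `(a, b)` has square `-(a - b)²`.

For a side `γ i` with neighbours `γ (i - 1)`, `γ (i + 1)`, the cross ratio defining `H i` gives
`sinh (H i) * d (i - 1) * d i * d (i + 1) = -2 * det (v (i - 1), v i, v (i + 1))`, where `v` are the
vectors and `d` the endpoint differences. The product of two such determinants for consecutive
triples is a Gram determinant which collapses by orthogonality, so
`sinh (H i) * sinh (H (i + 1)) * d (i - 1) * d (i + 2)` is the pairing of `v (i - 1)` and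
`v (i + 2)`. The pairs `(i, i + 1)` and `(i + 3, i + 4)` see the same two sides, hence
`sinh H₁ sinh H₆ = sinh H₃ sinh H₄` and `sinh H₂ sinh H₃ = sinh H₅ sinh H₆`: the law of sines.
-/

open Complex

/-- The cross ratio `R(a,b,c,d) = ((a−c)(b−d))/((a−d)(b−c))`. -/
noncomputable def crossRatio (a b c d : ℂ) : ℂ :=
  ((a - c) * (b - d)) / ((a - d) * (b - c))

/-- Two geodesics of `H³`, recorded by their (finite) ideal endpoints, are
perpendicular iff the cross ratio of their endpoints is `−1`. -/
def Perp (u u' w w' : ℂ) : Prop := crossRatio u u' w w' = -1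

/-- A right-angled hexagon in `H³`: a cyclically ordered 6-tuple of oriented
geodesics `γ i = (u_i, u'_i)` (recorded by their ideal endpoints, in generic
position so all endpoints are distinct), with consecutive geodesics orthogonal
and non-adjacent geodesics distinct, together with complex side widths `H i`
defined by the double-cross cross-ratio formula
`e^{H i} = R(u_{i−1}, u_{i+1}, u'_i, u_i)` (widths of `(γ_{i−1}, γ_{i+1}; γ_i)`). -/
structure RightAngledHexagon where
  γ : Fin 6 → ℂ × ℂ
  H : Fin 6 → ℂ
  endpoints_distinct : Function.Injective (fun p : Fin 6 × Bool =>
    if p.2 then (γ p.1).2 else (γ p.1).1)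
  nonadjacent_distinct : ∀ i : Fin 6, γ i ≠ γ (i + 2)
  perp : ∀ i : Fin 6, Perp (γ i).1 (γ i).2 (γ (i + 1)).1 (γ (i + 1)).2
  width : ∀ i : Fin 6, Complex.exp (H i) =
    crossRatio (γ (i - 1)).1 (γ (i + 1)).1 (γ i).2 (γ i).1

open Matrix

theorem det_mul_det_mul_det_of_orthogonal {R : Type*} [CommRing R]
    (J : Matrix (Fin 3) (Fin 3) R) (g a b c : Fin 3 → R)
    (hga : g ⬝ᵥ J *ᵥ a = 0) (hab : a ⬝ᵥ J *ᵥ b = 0) (hba : b ⬝ᵥ J *ᵥ a = 0)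
    (hbc : b ⬝ᵥ J *ᵥ c = 0) :
    det (of ![g, a, b]) * det J * det (of ![a, b, c]) =
      (g ⬝ᵥ J *ᵥ c) * (a ⬝ᵥ J *ᵥ a) * (b ⬝ᵥ J *ᵥ b) := by
  have gram : ∀ (X Y : Fin 3 → Fin 3 → R) i j,
      (of X * J * (of Y)ᵀ) i j = X i ⬝ᵥ J *ᵥ Y j := by
    intro X Y i j
    rw [mul_apply', dotProduct_mulVec]
    rfl
  rw [← det_transpose (of ![a, b, c]), ← det_mul, ← det_mul, det_fin_three]
  simp only [gram]
  simp only [cons_val_zero, cons_val_one, cons_val, hga, hab, hba, hbc]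
  ring

def geodesicVec (a b : ℂ) : Fin 3 → ℂ := ![1, -(a + b), a * b]

/-- Gram matrix of the polarization of `4 p₀ p₂ - p₁²`, minus the discriminant of
`p₀ t² + p₁ t + p₂`. -/
def discForm : Matrix (Fin 3) (Fin 3) ℂ := !![0, 0, 2; 0, -1, 0; 2, 0, 0]

theorem det_discForm : det discForm = 4 := by
  rw [discForm, det_fin_three]
  simp only [of_apply, cons_val_zero, cons_val_one, cons_val]
  norm_num

theorem geodesicVec_discForm_geodesicVec (a b c d : ℂ) :
    geodesicVec a b ⬝ᵥ discForm *ᵥ geodesicVec c d =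
      (a - c) * (b - d) + (a - d) * (b - c) := by
  simp only [geodesicVec, discForm, dotProduct, mulVec, Fin.sum_univ_three, of_apply, cons_val_zero,
    cons_val_one, cons_val]
  ring

theorem geodesicVec_discForm_comm (a b c d : ℂ) :
    geodesicVec a b ⬝ᵥ discForm *ᵥ geodesicVec c d =
      geodesicVec c d ⬝ᵥ discForm *ᵥ geodesicVec a b := by
  simp only [geodesicVec_discForm_geodesicVec]
  ring

theorem geodesicVec_discForm_self (a b : ℂ) :
    geodesicVec a b ⬝ᵥ discForm *ᵥ geodesicVec a b = -(a - b) ^ 2 := by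
  rw [geodesicVec_discForm_geodesicVec]
  ring

theorem geodesicVec_orthogonal_of_perp {a b c d : ℂ} (h : Perp a b c d) (had : a ≠ d)
    (hbc : b ≠ c) : geodesicVec a b ⬝ᵥ discForm *ᵥ geodesicVec c d = 0 := by
  unfold Perp crossRatio at h
  rw [div_eq_iff (mul_ne_zero (sub_ne_zero.mpr had) (sub_ne_zero.mpr hbc))] at h
  rw [geodesicVec_discForm_geodesicVec]
  linear_combination h

/-- Up to the factor `2 * a - b - y`, the vector of the geodesic from `a` perpendicular
to `(b, y)`. -/
def perpVec (a b y : ℂ) : Fin 3 → ℂ :=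
  ![2 * a - b - y, 2 * (b * y - a ^ 2), a ^ 2 * (b + y) - 2 * a * b * y]

theorem smul_geodesicVec_eq_perpVec {a x b y : ℂ}
    (h : geodesicVec a x ⬝ᵥ discForm *ᵥ geodesicVec b y = 0) :
    (2 * a - b - y) • geodesicVec a x = perpVec a b y := by
  rw [geodesicVec_discForm_geodesicVec] at h
  simp only [geodesicVec, perpVec, smul_cons, smul_eq_mul, smul_empty, vecCons_inj]
  exact ⟨by ring, by linear_combination -h, by linear_combination a * h, trivial⟩

theorem sub_mul_eq_of_orthogonal {a x b y : ℂ}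
    (h : geodesicVec a x ⬝ᵥ discForm *ᵥ geodesicVec b y = 0) :
    (a - x) * (2 * a - b - y) = 2 * (a - b) * (a - y) := by
  rw [geodesicVec_discForm_geodesicVec] at h
  linear_combination -h

theorem two_mul_sub_sub_ne_zero_of_orthogonal {a x b y : ℂ}
    (h : geodesicVec a x ⬝ᵥ discForm *ᵥ geodesicVec b y = 0) (hby : b ≠ y) :
    2 * a - b - y ≠ 0 := by
  rw [geodesicVec_discForm_geodesicVec] at h
  intro h0
  have : (b - y) ^ 2 = 0 := by linear_combination (2 * x - b - y) * h0 - 2 * h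
  exact hby (sub_eq_zero.mp (pow_eq_zero_iff two_ne_zero |>.mp this))

theorem sinh_mul_eq_of_exp_eq_div {H N D : ℂ} (hN : N ≠ 0) (hD : D ≠ 0) (h : exp H = N / D) :
    sinh H * (2 * N * D) = N ^ 2 - D ^ 2 := by
  have h2 := two_sinh H
  rw [exp_neg, h, inv_div] at h2
  field_simp at h2
  linear_combination h2

theorem sinh_mul_eq_det_of_exp_eq_crossRatio {H a x b y c z : ℂ}
    (hax : geodesicVec a x ⬝ᵥ discForm *ᵥ geodesicVec b y = 0)
    (hcz : geodesicVec c z ⬝ᵥ discForm *ᵥ geodesicVec b y = 0)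
    (hab : a ≠ b) (hay : a ≠ y) (hcb : c ≠ b) (hcy : c ≠ y) (hby : b ≠ y)
    (hH : exp H = crossRatio a c y b) :
    sinh H * ((a - x) * (b - y) * (c - z)) =
      -2 * det (of ![geodesicVec a x, geodesicVec b y, geodesicVec c z]) := by
  have hN : (a - y) * (c - b) ≠ 0 := mul_ne_zero (sub_ne_zero.mpr hay) (sub_ne_zero.mpr hcb)
  have hD : (a - b) * (c - y) ≠ 0 := mul_ne_zero (sub_ne_zero.mpr hab) (sub_ne_zero.mpr hcy)
  have fa := sub_mul_eq_of_orthogonal hax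
  have fc := sub_mul_eq_of_orthogonal hcz
  -- Scaling the outer rows by these factors turns them into `perpVec`s, eliminating `x` and `z`.
  refine mul_right_cancel₀ (mul_ne_zero (two_mul_sub_sub_ne_zero_of_orthogonal hax hby)
    (two_mul_sub_sub_ne_zero_of_orthogonal hcz hby)) ?_
  calc sinh H * ((a - x) * (b - y) * (c - z)) * ((2 * a - b - y) * (2 * c - b - y))
      = sinh H * (2 * ((a - y) * (c - b)) * ((a - b) * (c - y))) * (2 * (b - y)) := by
        linear_combination sinh H * (b - y) *
          ((c - z) * (2 * c - b - y) * fa + 2 * (a - b) * (a - y) * fc)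
    _ = -2 * det (of ![perpVec a b y, geodesicVec b y, perpVec c b y]) := by
        rw [sinh_mul_eq_of_exp_eq_div hN hD hH, det_fin_three]
        simp only [perpVec, geodesicVec, of_apply, cons_val_zero, cons_val_one, cons_val]
        ring
    _ = -2 * det (of ![geodesicVec a x, geodesicVec b y, geodesicVec c z]) *
          ((2 * a - b - y) * (2 * c - b - y)) := by
        rw [← smul_geodesicVec_eq_perpVec hax, ← smul_geodesicVec_eq_perpVec hcz]
        simp only [det_fin_three, of_apply, Pi.smul_apply, smul_eq_mul, cons_val_zero, cons_val_one,
          cons_val]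
        ring

namespace RightAngledHexagon

variable (hex : RightAngledHexagon)

def vec (i : Fin 6) : Fin 3 → ℂ := geodesicVec (hex.γ i).1 (hex.γ i).2

def endpointDiff (i : Fin 6) : ℂ := (hex.γ i).1 - (hex.γ i).2

theorem vec_discForm_comm (i j : Fin 6) :
    hex.vec i ⬝ᵥ discForm *ᵥ hex.vec j = hex.vec j ⬝ᵥ discForm *ᵥ hex.vec i :=
  geodesicVec_discForm_comm _ _ _ _

theorem vec_discForm_self (i : Fin 6) :
    hex.vec i ⬝ᵥ discForm *ᵥ hex.vec i = -hex.endpointDiff i ^ 2 :=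
  geodesicVec_discForm_self _ _

theorem fst_ne_snd (i j : Fin 6) : (hex.γ i).1 ≠ (hex.γ j).2 := fun h => by
  simpa using hex.endpoints_distinct (a₁ := (i, false)) (a₂ := (j, true)) h

theorem fst_ne_fst {i j : Fin 6} (hij : i ≠ j) : (hex.γ i).1 ≠ (hex.γ j).1 := fun h => by
  simpa [hij] using hex.endpoints_distinct (a₁ := (i, false)) (a₂ := (j, false)) h

theorem endpointDiff_ne_zero (i : Fin 6) : hex.endpointDiff i ≠ 0 :=
  sub_ne_zero.mpr (hex.fst_ne_snd i i)

theorem vec_orthogonal_succ (i : Fin 6) : hex.vec i ⬝ᵥ discForm *ᵥ hex.vec (i + 1) = 0 :=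
  geodesicVec_orthogonal_of_perp (hex.perp i) (hex.fst_ne_snd _ _) (hex.fst_ne_snd _ _).symm

theorem vec_orthogonal_pred (i : Fin 6) : hex.vec (i - 1) ⬝ᵥ discForm *ᵥ hex.vec i = 0 := by
  simpa using hex.vec_orthogonal_succ (i - 1)

theorem sinh_mul_eq_det (i : Fin 6) :
    sinh (hex.H i) * (hex.endpointDiff (i - 1) * hex.endpointDiff i * hex.endpointDiff (i + 1)) =
      -2 * det (of ![hex.vec (i - 1), hex.vec i, hex.vec (i + 1)]) := by
  have hnext := hex.vec_orthogonal_succ i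
  rw [vec_discForm_comm] at hnext
  exact sinh_mul_eq_det_of_exp_eq_crossRatio (hex.vec_orthogonal_pred i) hnext
    (hex.fst_ne_fst (by simp)) (hex.fst_ne_snd _ _) (hex.fst_ne_fst (by simp)) (hex.fst_ne_snd _ _)
    (hex.fst_ne_snd _ _) (hex.width i)

theorem sinh_mul_sinh_succ_mul (i : Fin 6) :
    sinh (hex.H i) * sinh (hex.H (i + 1)) * (hex.endpointDiff (i - 1) * hex.endpointDiff (i + 2)) =
      hex.vec (i - 1) ⬝ᵥ discForm *ᵥ hex.vec (i + 2) := by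
  have k₁ := hex.sinh_mul_eq_det i
  have k₂ := hex.sinh_mul_eq_det (i + 1)
  rw [add_sub_cancel_right, (by decide : ∀ j : Fin 6, j + 1 + 1 = j + 2)] at k₂
  have hg := det_mul_det_mul_det_of_orthogonal discForm _ _ _ _ (hex.vec_orthogonal_pred i)
    (hex.vec_orthogonal_succ i) (by rw [vec_discForm_comm]; exact hex.vec_orthogonal_succ i)
    (by simpa [(by decide : ∀ j : Fin 6, j + 1 + 1 = j + 2)]
      using hex.vec_orthogonal_succ (i + 1))
  rw [det_discForm, vec_discForm_self, vec_discForm_self] at hg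
  refine mul_right_cancel₀ (mul_ne_zero (pow_ne_zero 2 (hex.endpointDiff_ne_zero i))
    (pow_ne_zero 2 (hex.endpointDiff_ne_zero (i + 1)))) ?_
  linear_combination (sinh (hex.H (i + 1)) *
      (hex.endpointDiff i * hex.endpointDiff (i + 1) * hex.endpointDiff (i + 2))) * k₁ +
    (-2 * det (of ![hex.vec (i - 1), hex.vec i, hex.vec (i + 1)])) * k₂ + hg

theorem sinh_mul_sinh_succ_eq_add_three (i : Fin 6) :
    sinh (hex.H i) * sinh (hex.H (i + 1)) = sinh (hex.H (i + 3)) * sinh (hex.H (i + 4)) := by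
  have h₁ := hex.sinh_mul_sinh_succ_mul i
  have h₂ := hex.sinh_mul_sinh_succ_mul (i + 3)
  rw [(by decide : ∀ j : Fin 6, j + 3 - 1 = j + 2) i,
    (by decide : ∀ j : Fin 6, j + 3 + 1 = j + 4) i,
    (by decide : ∀ j : Fin 6, j + 3 + 2 = j - 1) i, vec_discForm_comm] at h₂
  refine mul_right_cancel₀
    (mul_ne_zero (hex.endpointDiff_ne_zero (i - 1)) (hex.endpointDiff_ne_zero (i + 2))) ?_
  linear_combination h₁ - h₂

end RightAngledHexagon

/-- law of sines for right-angled hexagons: with sides indexed so that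
`H 0, …, H 5` are `H_1, …, H_6`,
`sinh H₁ / sinh H₄ = sinh H₃ / sinh H₆ = sinh H₅ / sinh H₂`
(assuming the nondegeneracy `sinh (H i) ≠ 0`). -/
theorem hexagon_law_of_sines (hex : RightAngledHexagon)
    (hsinh : ∀ i : Fin 6, Complex.sinh (hex.H i) ≠ 0) :
    Complex.sinh (hex.H 0) / Complex.sinh (hex.H 3)
      = Complex.sinh (hex.H 2) / Complex.sinh (hex.H 5) ∧
    Complex.sinh (hex.H 2) / Complex.sinh (hex.H 5)
      = Complex.sinh (hex.H 4) / Complex.sinh (hex.H 1) := by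
  have h₅ := hex.sinh_mul_sinh_succ_eq_add_three 5
  have h₁ := hex.sinh_mul_sinh_succ_eq_add_three 1
  simp only [Fin.isValue, Fin.reduceAdd] at h₅ h₁
  constructor
  · rw [div_eq_div_iff (hsinh 3) (hsinh 5)]
    linear_combination h₅
  · rw [div_eq_div_iff (hsinh 5) (hsinh 1)]
    linear_combination h₁
end

section
/- For a right-angled hexagon in hyperbolic 3-space with complex side widths H_1,...,H_6, the law of cosines holds: cosh(H_i) = cosh(H_{i-2})·cosh(H_{i+2}) + sinh(H_{i-2})·sinh(H_{i+2})·cosh(H_{i+3}) for every i modulo 6. -/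
open Complex

/-!
Send an oriented geodesic with ideal endpoints `a, b` to the vector
`n(a, b) = (a - b)⁻¹ • (1 - ab, i (1 + ab), a + b)` of `ℂ³`. It has square `1` for the complex
bilinear dot product (the complexified hyperboloid model of `H³`), and it is proportional to the
cross product of the isotropic vectors `(1 - z², i (1 + z²), 2z)` of its endpoints. For a double
cross `(γ_{i-1}, γ_{i+1}; γ_i)` of orthogonal geodesics one finds `n_{i-1} ⬝ n_{i+1} = cosh H_i`
and `n_{i-1} × n_{i+1} = (i sinh H_i) • n_i`. The law of cosines for `H_i` is then the
Binet–Cauchy identity `(n₁ × n₃) ⬝ (n₃ × n₅) = (n₁ ⬝ n₃)(n₃ ⬝ n₅) - (n₁ ⬝ n₅)(n₃ ⬝ n₃)` for the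
sides `i + 1, i + 3, i - 1`.
-/

open Matrix

def nullVector (z : ℂ) : Fin 3 → ℂ := ![1 - z ^ 2, I * (1 + z ^ 2), 2 * z]

noncomputable def geodesicVector (a b : ℂ) : Fin 3 → ℂ :=
  (a - b)⁻¹ • ![1 - a * b, I * (1 + a * b), a + b]

theorem crossRatio_comm (a b c d : ℂ) : crossRatio c d a b = crossRatio a b c d := by
  unfold crossRatio; ring

theorem crossRatio_swap (a b c d : ℂ) : crossRatio a b d c = (crossRatio a b c d)⁻¹ :=
  (inv_div _ _).symm

namespace Perp

variable {a b p q : ℂ}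

theorem symm (h : Perp a b p q) : Perp p q a b := by
  rwa [Perp, crossRatio_comm]

theorem swap (h : Perp a b p q) : Perp a b q p := by
  rw [Perp, crossRatio_swap, h, inv_neg, inv_one]

theorem mul_ne_zero (h : Perp a b p q) : (a - q) * (b - p) ≠ 0 := by
  intro h0
  simp [Perp, crossRatio, h0] at h

theorem sub_mul_sub (h : Perp a b p q) : (a - b) * (q - p) = 2 * (a - q) * (b - p) := by
  have h' := h
  rw [Perp, crossRatio, div_eq_iff h.mul_ne_zero] at h'
  linear_combination -h'

theorem ne_snd (h : Perp a b p q) : a ≠ q :=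
  sub_ne_zero.mp (left_ne_zero_of_mul h.mul_ne_zero)

theorem ne_fst (h : Perp a b p q) : a ≠ p :=
  h.swap.ne_snd

theorem ne (h : Perp a b p q) : a ≠ b := by
  have h2 : 2 * (a - q) * (b - p) ≠ 0 := by
    rw [mul_assoc]; exact _root_.mul_ne_zero two_ne_zero h.mul_ne_zero
  rw [← h.sub_mul_sub] at h2
  exact sub_ne_zero.mp (left_ne_zero_of_mul h2)

end Perp

theorem nullVector_dotProduct (z w : ℂ) :
    nullVector z ⬝ᵥ nullVector w = -2 * (z - w) ^ 2 := by
  simp only [nullVector, vec3_dotProduct, cons_val_zero, cons_val_one, cons_val_two, tail_cons,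
    head_cons]
  linear_combination (1 + z ^ 2) * (1 + w ^ 2) * I_sq

theorem nullVector_cross (p q : ℂ) :
    nullVector p ⨯₃ nullVector q = (-2 * I * (p - q) ^ 2) • geodesicVector p q := by
  ext k
  fin_cases k <;>
    simp only [nullVector, geodesicVector, cross_apply, Pi.smul_apply, smul_eq_mul, Fin.zero_eta,
      Fin.mk_one, Fin.reduceFinMk, cons_val_zero, cons_val_one, cons_val_two, tail_cons,
      head_cons] <;>
    field_simp
  · ring
  · linear_combination (p - q) * (1 + p * q) * I_sq
  · ring

theorem geodesicVector_dotProduct_self {a b : ℂ} (hab : a ≠ b) :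
    geodesicVector a b ⬝ᵥ geodesicVector a b = 1 := by
  simp only [geodesicVector, smul_dotProduct, dotProduct_smul, vec3_dotProduct, cons_val_zero,
    cons_val_one, cons_val_two, tail_cons, head_cons, smul_eq_mul]
  field_simp
  linear_combination (1 + a * b) ^ 2 * I_sq

/-- In the coordinate `w = (a - p) / (a - q)`, which sends `p, q` to `0, ∞`, the geodesics
orthogonal to `(p, q)` are the points `w • nullVector q - w⁻¹ • nullVector p` of a hyperbola,
and `crossRatio a c q p` is the quotient of the coordinates of `c` and `a`. -/
theorem geodesicVector_eq_of_perp {a b p q : ℂ} (h : Perp a b p q) :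
    geodesicVector a b = (2 * (q - p))⁻¹ •
      (((a - p) / (a - q)) • nullVector q - ((a - q) / (a - p)) • nullVector p) := by
  have hqp : q ≠ p := h.symm.ne.symm
  have haq := h.ne_snd
  have hap := h.ne_fst
  have hab := h.ne
  ext k
  fin_cases k <;>
    simp only [nullVector, geodesicVector, Pi.smul_apply, Pi.sub_apply, smul_eq_mul, Fin.zero_eta,
      Fin.mk_one, Fin.reduceFinMk, cons_val_zero, cons_val_one, cons_val_two, tail_cons,
      head_cons] <;>
    field_simp
  · linear_combination (-(q - p) * (1 - a ^ 2)) * h.sub_mul_sub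
  · linear_combination (-(q - p) * (1 + a ^ 2)) * h.sub_mul_sub
  · linear_combination (-a * (q - p)) * h.sub_mul_sub

theorem cross_smul_sub_smul {R : Type*} [CommRing R] (u v : Fin 3 → R) (α β γ δ : R) :
    (α • u - β • v) ⨯₃ (γ • u - δ • v) = (α * δ - β * γ) • (v ⨯₃ u) := by
  simp only [map_sub, map_smul, LinearMap.sub_apply, LinearMap.smul_apply, cross_self,
    smul_zero]
  rw [← cross_anticomm v u]
  module

section DoubleCross

variable {a b c d p q H : ℂ}

theorem cosh_eq_dotProduct_of_perp (hab : Perp a b p q) (hcd : Perp c d p q)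
    (hH : exp H = crossRatio a c q p) :
    cosh H = geodesicVector a b ⬝ᵥ geodesicVector c d := by
  have hqp : q ≠ p := hab.symm.ne.symm
  have haq := hab.ne_snd
  have hap := hab.ne_fst
  have hcq := hcd.ne_snd
  have hcp := hcd.ne_fst
  rw [cosh, Complex.exp_neg, hH, geodesicVector_eq_of_perp hab, geodesicVector_eq_of_perp hcd]
  simp only [smul_dotProduct, dotProduct_smul, sub_dotProduct, dotProduct_sub,
    nullVector_dotProduct, crossRatio, smul_eq_mul]
  field_simp
  ring

theorem cross_eq_sinh_smul_of_perp (hab : Perp a b p q) (hcd : Perp c d p q)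
    (hH : exp H = crossRatio a c q p) :
    geodesicVector a b ⨯₃ geodesicVector c d = (I * sinh H) • geodesicVector p q := by
  have hqp : q ≠ p := hab.symm.ne.symm
  have haq := hab.ne_snd
  have hap := hab.ne_fst
  have hcq := hcd.ne_snd
  have hcp := hcd.ne_fst
  rw [sinh, Complex.exp_neg, hH, geodesicVector_eq_of_perp hab, geodesicVector_eq_of_perp hcd]
  simp only [map_smul, LinearMap.smul_apply, cross_smul_sub_smul, nullVector_cross p q,
    smul_smul]
  congr 1
  unfold crossRatio
  field_simp
  ring

end DoubleCross

theorem dotProduct_eq_sub_of_cross_eq_smul {R : Type*} [CommRing R]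
    {u₁ u₂ u₃ u₄ u₅ : Fin 3 → R} {s t : R} (h₃ : u₃ ⬝ᵥ u₃ = 1) (h₁₃ : u₁ ⨯₃ u₃ = s • u₂)
    (h₃₅ : u₃ ⨯₃ u₅ = t • u₄) :
    u₁ ⬝ᵥ u₅ = u₁ ⬝ᵥ u₃ * u₃ ⬝ᵥ u₅ - s * t * u₂ ⬝ᵥ u₄ := by
  have h := cross_dot_cross u₁ u₃ u₃ u₅
  rw [h₁₃, h₃₅, h₃, smul_dotProduct, dotProduct_smul, smul_eq_mul, smul_eq_mul] at h
  linear_combination h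

namespace RightAngledHexagon

variable (hex : RightAngledHexagon)

noncomputable def normal (j : Fin 6) : Fin 3 → ℂ :=
  geodesicVector (hex.γ j).1 (hex.γ j).2

theorem perp_sub_one (j : Fin 6) :
    Perp (hex.γ (j - 1)).1 (hex.γ (j - 1)).2 (hex.γ j).1 (hex.γ j).2 := by
  simpa using hex.perp (j - 1)

theorem normal_dotProduct_self (j : Fin 6) : hex.normal j ⬝ᵥ hex.normal j = 1 :=
  geodesicVector_dotProduct_self (hex.perp j).ne

theorem cosh_H_eq (j : Fin 6) : cosh (hex.H j) = hex.normal (j - 1) ⬝ᵥ hex.normal (j + 1) :=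
  cosh_eq_dotProduct_of_perp (hex.perp_sub_one j) (hex.perp j).symm (hex.width j)

theorem normal_cross (j : Fin 6) :
    hex.normal (j - 1) ⨯₃ hex.normal (j + 1) = (I * sinh (hex.H j)) • hex.normal j :=
  cross_eq_sinh_smul_of_perp (hex.perp_sub_one j) (hex.perp j).symm (hex.width j)

end RightAngledHexagon

/-- law of cosines for right-angled hexagons: for every `i` (mod 6),
`cosh H_i = cosh H_{i−2} · cosh H_{i+2} + sinh H_{i−2} · sinh H_{i+2} · cosh H_{i+3}`. -/
theorem hexagon_law_of_cosines (hex : RightAngledHexagon) :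
    ∀ i : Fin 6,
      Complex.cosh (hex.H i)
        = Complex.cosh (hex.H (i - 2)) * Complex.cosh (hex.H (i + 2))
          + Complex.sinh (hex.H (i - 2)) * Complex.sinh (hex.H (i + 2))
            * Complex.cosh (hex.H (i + 3)) := by
  intro i
  obtain ⟨h₁, h₂, h₃, h₄, h₅, h₆⟩ : i + 2 - 1 = i + 1 ∧ i + 2 + 1 = i + 3 ∧ i - 2 - 1 = i + 3 ∧
      i - 2 + 1 = i - 1 ∧ i + 3 - 1 = i + 2 ∧ i + 3 + 1 = i - 2 := by
    revert i; decide
  have hcross₂ := hex.normal_cross (i + 2)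
  have hcross₄ := hex.normal_cross (i - 2)
  rw [h₁, h₂] at hcross₂
  rw [h₃, h₄] at hcross₄
  have hlaw := dotProduct_eq_sub_of_cross_eq_smul (hex.normal_dotProduct_self (i + 3)) hcross₂
    hcross₄
  rw [hex.cosh_H_eq i, hex.cosh_H_eq (i + 2), hex.cosh_H_eq (i - 2), hex.cosh_H_eq (i + 3),
    h₁, h₂, h₃, h₄, h₅, h₆, dotProduct_comm, hlaw]
  linear_combination (-(sinh (hex.H (i - 2)) * sinh (hex.H (i + 2)))
    * (hex.normal (i + 2) ⬝ᵥ hex.normal (i - 2))) * I_sq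
end

section
/- Let g = G_L·[[a,b],[c,d]] ∈ PSL(2,R) with a > 0, c ≠ 0, ad−bc=1, and set N_1 = a e^{L/2} − d e^{−L/2}, N_2 = sqrt((a e^{L/2} + d e^{−L/2})^2 − 4) (root with nonnegative real part), D = 2c e^{−L/2}. Then the fixed points of g on the boundary are e_0 = (N_1 − N_2)/D and e_1 = (N_1 + N_2)/D, and the cross ratio R(∞, 0, e_0, e_1) = (N_1+N_2)/(N_1−N_2), so that cosh of the width H_2 between the geodesic (∞,0) and axis(g) satisfies cosh(H_2) = −N_1/N_2. -/
open Complex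

/-- Let `g = G_L·[[a,b],[c,d]] ∈ PSL(2,ℝ)` with `a > 0`, `c ≠ 0`,
`ad − bc = 1`, i.e. the matrix `[[a e^{L/2}, b e^{L/2}], [c e^{−L/2}, d e^{−L/2}]]`,
and set `N₁ = a e^{L/2} − d e^{−L/2}`, `N₂ = √((a e^{L/2} + d e^{−L/2})² − 4)` (the root
with nonnegative real part), `D = 2c e^{−L/2}`. Then `e₀ = (N₁ − N₂)/D` and
`e₁ = (N₁ + N₂)/D` are fixed points of `g` on the boundary, the cross ratio
`R(∞, 0, e₀, e₁) = e₁/e₀` equals `(N₁+N₂)/(N₁−N₂)`, and consequently any width `H₂` with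
`tanh²(H₂/2) = R(∞,0,e₀,e₁)` (the width between the geodesic `(∞,0)` and `axis(g)`)
satisfies `cosh H₂ = −N₁/N₂`. -/
theorem fixed_points_and_H2 (a b c d L : ℝ) (ha : 0 < a) (hc : c ≠ 0)
    (hdet : a * d - b * c = 1) (N₁ N₂ D e₀ e₁ : ℂ)
    (hN₁ : N₁ = (a : ℂ) * Complex.exp (L / 2) - (d : ℂ) * Complex.exp (-(L / 2 : ℂ)))
    (hN₂sq : N₂ ^ 2 = ((a : ℂ) * Complex.exp (L / 2) + (d : ℂ) * Complex.exp (-(L / 2 : ℂ))) ^ 2 - 4)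
    (hN₂re : 0 ≤ N₂.re) (hN₂ : N₂ ≠ 0) (hN₁₂ : N₁ ≠ N₂)
    (hD : D = 2 * (c : ℂ) * Complex.exp (-(L / 2 : ℂ)))
    (he₀ : e₀ = (N₁ - N₂) / D) (he₁ : e₁ = (N₁ + N₂) / D) :
    ((a : ℂ) * Complex.exp (L / 2) * e₀ + (b : ℂ) * Complex.exp (L / 2)
        = e₀ * ((c : ℂ) * Complex.exp (-(L / 2 : ℂ)) * e₀ + (d : ℂ) * Complex.exp (-(L / 2 : ℂ)))) ∧
    ((a : ℂ) * Complex.exp (L / 2) * e₁ + (b : ℂ) * Complex.exp (L / 2)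
        = e₁ * ((c : ℂ) * Complex.exp (-(L / 2 : ℂ)) * e₁ + (d : ℂ) * Complex.exp (-(L / 2 : ℂ)))) ∧
    e₁ / e₀ = (N₁ + N₂) / (N₁ - N₂) ∧
    ∀ H₂ : ℂ, Complex.cosh (H₂ / 2) ≠ 0 → Complex.tanh (H₂ / 2) ^ 2 = e₁ / e₀ →
      Complex.cosh H₂ = -N₁ / N₂ := by
  have hE : Complex.exp (L / 2 : ℂ) * Complex.exp (-(L / 2 : ℂ)) = 1 := by
    rw [← Complex.exp_add]; norm_num
  have hdet' : (a : ℂ) * (d : ℂ) - (b : ℂ) * (c : ℂ) = 1 := by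
    exact_mod_cast congrArg (fun x : ℝ => (x : ℂ)) hdet
  have hDne : D ≠ 0 := by
    rw [hD]
    exact mul_ne_zero (mul_ne_zero two_ne_zero (Complex.ofReal_ne_zero.2 hc))
      (Complex.exp_ne_zero _)
  have hsub : N₁ - N₂ ≠ 0 := sub_ne_zero.2 hN₁₂
  have hkey : N₂ ^ 2 - N₁ ^ 2
      = 4 * ((b : ℂ) * Complex.exp (L / 2)) * ((c : ℂ) * Complex.exp (-(L / 2 : ℂ))) := by
    rw [hN₂sq, hN₁]
    linear_combination (4 * Complex.exp (L / 2 : ℂ) * Complex.exp (-(L / 2 : ℂ))) * hdet'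
      + 4 * hE
  have h0 : e₀ * D = N₁ - N₂ := by rw [he₀, div_mul_cancel₀ _ hDne]
  have h1 : e₁ * D = N₁ + N₂ := by rw [he₁, div_mul_cancel₀ _ hDne]
  have fix0 : (a : ℂ) * Complex.exp (L / 2) * e₀ + (b : ℂ) * Complex.exp (L / 2)
      = e₀ * ((c : ℂ) * Complex.exp (-(L / 2 : ℂ)) * e₀ + (d : ℂ) * Complex.exp (-(L / 2 : ℂ))) := by
    refine mul_left_cancel₀ (pow_ne_zero 2 hDne) ?_
    linear_combination
      (-(c : ℂ) * Complex.exp (-(L / 2 : ℂ)) * (e₀ * D + (N₁ - N₂))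
        + ((a : ℂ) * Complex.exp (L / 2) - (d : ℂ) * Complex.exp (-(L / 2 : ℂ))) * D) * h0
      + (-(D * (N₁ - N₂))) * hN₁
      + (N₁ * (N₁ - N₂) + (b : ℂ) * Complex.exp (L / 2)
          * (D + 2 * (c : ℂ) * Complex.exp (-(L / 2 : ℂ)))) * hD
      + (-(c : ℂ) * Complex.exp (-(L / 2 : ℂ))) * hkey
  have fix1 : (a : ℂ) * Complex.exp (L / 2) * e₁ + (b : ℂ) * Complex.exp (L / 2)
      = e₁ * ((c : ℂ) * Complex.exp (-(L / 2 : ℂ)) * e₁ + (d : ℂ) * Complex.exp (-(L / 2 : ℂ))) := by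
    refine mul_left_cancel₀ (pow_ne_zero 2 hDne) ?_
    linear_combination
      (-(c : ℂ) * Complex.exp (-(L / 2 : ℂ)) * (e₁ * D + (N₁ + N₂))
        + ((a : ℂ) * Complex.exp (L / 2) - (d : ℂ) * Complex.exp (-(L / 2 : ℂ))) * D) * h1
      + (-(D * (N₁ + N₂))) * hN₁
      + (N₁ * (N₁ + N₂) + (b : ℂ) * Complex.exp (L / 2)
          * (D + 2 * (c : ℂ) * Complex.exp (-(L / 2 : ℂ)))) * hD
      + (-(c : ℂ) * Complex.exp (-(L / 2 : ℂ))) * hkey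
  have hcr : e₁ / e₀ = (N₁ + N₂) / (N₁ - N₂) := by
    rw [he₀, he₁]
    field_simp
  refine ⟨fix0, fix1, hcr, ?_⟩
  intro H₂ hcosh htanh
  rw [hcr] at htanh
  have hpy : Complex.cosh (H₂ / 2) ^ 2 - Complex.sinh (H₂ / 2) ^ 2 = 1 :=
    Complex.cosh_sq_sub_sinh_sq _
  rw [Complex.tanh_eq_sinh_div_cosh, div_pow,
    div_eq_div_iff (pow_ne_zero 2 hcosh) hsub] at htanh
  have h2 : H₂ = 2 * (H₂ / 2) := by ring
  rw [h2, Complex.cosh_two_mul]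
  field_simp
  linear_combination (-N₁) * hpy - htanh
end

section
/- Let N_1, N_2, D ∈ C with N_2 ≠ 0, D ≠ 0, let J ∈ C \ {0}, M ∈ C, and set M̂ = tanh(M/2), e_0 = (N_1−N_2)/D, e_1 = (N_1+N_2)/D, f_0 = −M̂ J, f_1 = −J/M̂. Then the cross ratio satisfies (1 + R)/(1 − R) = cosh(M)·(N_1/N_2) + sinh(M)·x, where R = R(f_0, f_1, e_0, e_1) and x = (1/2)·(D J^2 + (N_1^2 − N_2^2)/D)/(J N_2). -/
open Complex

/-!
For a quotient `R = B / A`, `(1 + R) / (1 - R) = (A + B) / (A - B)`; for the cross ratio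
`A - B = (f₀ - f₁)(e₁ - e₀)` factors, and `A + B` only involves `f₀f₁`, `f₀ + f₁`, `e₀e₁` and
`e₀ + e₁`. The half-angle formulas `cosh M = (1 + t²) / (1 - t²)`, `sinh M = 2t / (1 - t²)` with
`t = tanh (M / 2)` then turn the claim into a rational identity in `t`.
-/

theorem one_add_crossRatio_div_one_sub_crossRatio {a b c d : ℂ} (h : (a - d) * (b - c) ≠ 0) :
    (1 + crossRatio a b c d) / (1 - crossRatio a b c d) =
      (2 * a * b - (a + b) * (c + d) + 2 * c * d) / ((a - b) * (d - c)) := by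
  rw [crossRatio, one_add_div h, one_sub_div h, div_div_div_cancel_right₀ h]
  congr 1 <;> ring

namespace Complex

variable {z : ℂ}

theorem one_sub_tanh_sq (hz : cosh z ≠ 0) : 1 - tanh z ^ 2 = (cosh z ^ 2)⁻¹ := by
  rw [tanh_eq_sinh_div_cosh, div_pow, one_sub_div (pow_ne_zero 2 hz), cosh_sq_sub_sinh_sq,
    one_div]

theorem cosh_eq_tanh_half (hz : cosh (z / 2) ≠ 0) :
    cosh z = (1 + tanh (z / 2) ^ 2) / (1 - tanh (z / 2) ^ 2) := by
  conv_lhs => rw [← mul_div_cancel₀ z two_ne_zero, cosh_two_mul]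
  rw [one_sub_tanh_sq hz, tanh_eq_sinh_div_cosh, div_inv_eq_mul, add_mul, one_mul, div_pow,
    div_mul_cancel₀ _ (pow_ne_zero 2 hz), add_comm]

theorem sinh_eq_tanh_half (hz : cosh (z / 2) ≠ 0) :
    sinh z = 2 * tanh (z / 2) / (1 - tanh (z / 2) ^ 2) := by
  conv_lhs => rw [← mul_div_cancel₀ z two_ne_zero, sinh_two_mul]
  rw [one_sub_tanh_sq hz, tanh_eq_sinh_div_cosh]
  field_simp

end Complex

theorem crossRatio_H4_identity_general (N₁ N₂ D J M : ℂ)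
    (hN₂ : N₂ ≠ 0) (hD : D ≠ 0) (hJ : J ≠ 0)
    (hcosh : Complex.cosh (M / 2) ≠ 0) (hMhat : Complex.tanh (M / 2) ≠ 0)
    (e₀ e₁ f₀ f₁ R x : ℂ)
    (he₀ : e₀ = (N₁ - N₂) / D) (he₁ : e₁ = (N₁ + N₂) / D)
    (hf₀ : f₀ = -Complex.tanh (M / 2) * J) (hf₁ : f₁ = -J / Complex.tanh (M / 2))
    (hR : R = crossRatio f₀ f₁ e₀ e₁)
    (hden₁ : f₀ - e₁ ≠ 0) (hden₂ : f₁ - e₀ ≠ 0)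
    (hx : x = (1 / 2) * (D * J ^ 2 + (N₁ ^ 2 - N₂ ^ 2) / D) / (J * N₂)) :
    (1 + R) / (1 - R) = Complex.cosh M * (N₁ / N₂) + Complex.sinh M * x := by
  have h1t : 1 - tanh (M / 2) ^ 2 ≠ 0 := by
    rw [one_sub_tanh_sq hcosh]
    exact inv_ne_zero (pow_ne_zero 2 hcosh)
  rw [hR, one_add_crossRatio_div_one_sub_crossRatio (mul_ne_zero hden₁ hden₂),
    cosh_eq_tanh_half hcosh, sinh_eq_tanh_half hcosh]
  generalize tanh (M / 2) = t at hf₀ hf₁ hMhat h1t ⊢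
  have hf : f₀ - f₁ = J * (1 - t ^ 2) / t := by
    rw [hf₀, hf₁]
    field_simp
    ring
  have he : e₁ - e₀ = 2 * N₂ / D := by
    rw [he₀, he₁]
    ring
  rw [hf, he, hx, he₀, he₁, hf₀, hf₁]
  field_simp
  ring

/-- With `N₁, N₂, D ∈ ℂ`, `N₂ ≠ 0`, `D ≠ 0`, `J ≠ 0`, `M ∈ ℂ`,
`M̂ = tanh(M/2)`, `e₀ = (N₁−N₂)/D`, `e₁ = (N₁+N₂)/D`, `f₀ = −M̂ J`, `f₁ = −J/M̂`,
and `R = R(f₀, f₁, e₀, e₁)`, one has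
`(1 + R)/(1 − R) = cosh(M)·(N₁/N₂) + sinh(M)·x` where
`x = (1/2)(D J² + (N₁² − N₂²)/D)/(J N₂)` (all denominators assumed nonzero). -/
theorem crossRatio_H4_identity (N₁ N₂ D J M : ℂ)
    (hN₂ : N₂ ≠ 0) (hD : D ≠ 0) (hJ : J ≠ 0)
    (hcosh : Complex.cosh (M / 2) ≠ 0) (hMhat : Complex.tanh (M / 2) ≠ 0)
    (e₀ e₁ f₀ f₁ R x : ℂ)
    (he₀ : e₀ = (N₁ - N₂) / D) (he₁ : e₁ = (N₁ + N₂) / D)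
    (hf₀ : f₀ = -Complex.tanh (M / 2) * J) (hf₁ : f₁ = -J / Complex.tanh (M / 2))
    (hR : R = crossRatio f₀ f₁ e₀ e₁)
    (hden₁ : f₀ - e₁ ≠ 0) (hden₂ : f₁ - e₀ ≠ 0) (hR1 : R ≠ 1)
    (hx : x = (1 / 2) * (D * J ^ 2 + (N₁ ^ 2 - N₂ ^ 2) / D) / (J * N₂)) :
    (1 + R) / (1 - R) = Complex.cosh M * (N₁ / N₂) + Complex.sinh M * x :=
  crossRatio_H4_identity_general N₁ N₂ D J M hN₂ hD hJ hcosh hMhat e₀ e₁ f₀ f₁ R x he₀ he₁ hf₀ hf₁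
    hR hden₁ hden₂ hx
end
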